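/- (Forward direction of Proposition 1) Let X1, X2, U be random variables with U = s1(X1) = s2(X2) almost surely for some functions s1, s2, and suppose X1 and X2 are conditionally independent given U. Then for all functions f1, f2 with f1(X1) = f2(X2) almost surely, there exists a function f such that f(U) = f1(X1) almost surely. -/

import Mathlib

open Real
open scoped BigOperators Classical

/-- The distribution (pushforward pmf) of a random variable `X` under the weight
function `p` on a finite sample space. -/
noncomputable def dist {Ω S : Type*} [Fintype Ω] (p : Ω → ℝ) (X : Ω → S) (s : S) : ℝ :=
  ∑ ω : Ω, if X ω = s then p ω else 0

/-- Shannon entropy of a finite-valued random variable. -/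
noncomputable def ent {Ω S : Type*} [Fintype Ω] [Fintype S] (p : Ω → ℝ) (X : Ω → S) : ℝ :=
  -∑ s : S, dist p X s * Real.log (dist p X s)

/-- Shannon conditional entropy `H(X | Y)`, via the chain rule. -/
noncomputable def condEnt {Ω S T : Type*} [Fintype Ω] [Fintype S] [Fintype T]
    (p : Ω → ℝ) (X : Ω → S) (Y : Ω → T) : ℝ :=
  ent p (fun ω => (X ω, Y ω)) - ent p Y

/-- Shannon mutual information `I(X; Y)`. -/
noncomputable def mutInfo {Ω S T : Type*} [Fintype Ω] [Fintype S] [Fintype T]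
    (p : Ω → ℝ) (X : Ω → S) (Y : Ω → T) : ℝ :=
  ent p X + ent p Y - ent p (fun ω => (X ω, Y ω))

/-- Conditional mutual information `I(X; Y | Z)`. -/
noncomputable def condMutInfo {Ω S T V : Type*} [Fintype Ω] [Fintype S] [Fintype T] [Fintype V]
    (p : Ω → ℝ) (X : Ω → S) (Y : Ω → T) (Z : Ω → V) : ℝ :=
  ent p (fun ω => (X ω, Z ω)) + ent p (fun ω => (Y ω, Z ω))
    - ent p (fun ω => (X ω, Y ω, Z ω)) - ent p Z

/-- `p` is a probability mass function on the finite sample space. -/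
def IsPMF {Ω : Type*} [Fintype Ω] (p : Ω → ℝ) : Prop :=
  (∀ ω, 0 ≤ p ω) ∧ ∑ ω : Ω, p ω = 1

/-- Equality `p`-almost surely. -/
def AEEq {Ω S : Type*} (p : Ω → ℝ) (f g : Ω → S) : Prop :=
  ∀ ω, p ω ≠ 0 → f ω = g ω

/-- Kullback–Leibler divergence between two pmfs on a finite type. -/
noncomputable def klDiv {A : Type*} [Fintype A] (q r : A → ℝ) : ℝ :=
  ∑ a : A, q a * Real.log (q a / r a)

section Aux

variable {Ω S1 S2 SU : Type*} [Fintype Ω] [Fintype S1] [Fintype S2] [Fintype SU]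

lemma dist_nn {p : Ω → ℝ} (hp : ∀ ω, 0 ≤ p ω) {S : Type*} (X : Ω → S) (s : S) :
    0 ≤ _root_.dist p X s := by
  apply Finset.sum_nonneg; intro ω _; split_ifs <;> simp [hp ω]

lemma sum_dist {S : Type*} [Fintype S] (p : Ω → ℝ) (X : Ω → S) :
    ∑ s : S, _root_.dist p X s = ∑ ω : Ω, p ω := by
  unfold _root_.dist
  rw [Finset.sum_comm]
  simp

lemma dist_map {S T : Type*} [Fintype S] (p : Ω → ℝ) (X : Ω → S) (g : S → T) (t : T) :
    _root_.dist p (fun ω => g (X ω)) t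
      = ∑ s ∈ Finset.univ.filter (fun s => g s = t), _root_.dist p X s := by
  rw [Finset.sum_filter]
  unfold _root_.dist
  have h : ∀ (c : Prop) [Decidable c] (f : Ω → ℝ),
      (if c then ∑ ω : Ω, f ω else 0) = ∑ ω : Ω, if c then f ω else 0 := by
    intro c _ f; split_ifs <;> simp
  simp_rw [h]
  rw [Finset.sum_comm]
  refine Finset.sum_congr rfl fun ω _ => ?_
  simp_rw [← ite_and, and_comm (a := g _ = t)]
  simp [ite_and]

lemma marg1 (p : Ω → ℝ) (X1 : Ω → S1) (X2 : Ω → S2) (U : Ω → SU) (y : S1 × SU) :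
    _root_.dist p (fun ω => (X1 ω, U ω)) y
      = ∑ x2 : S2, _root_.dist p (fun ω => (X1 ω, X2 ω, U ω)) (y.1, x2, y.2) := by
  refine (dist_map p (fun ω => (X1 ω, X2 ω, U ω)) (fun a => (a.1, a.2.2)) y).trans ?_
  refine Finset.sum_nbij' (fun a => a.2.1) (fun b => (y.1, b, y.2)) ?_ ?_ ?_ ?_ ?_ <;>
    simp_all [Prod.ext_iff]

lemma marg2 (p : Ω → ℝ) (X1 : Ω → S1) (X2 : Ω → S2) (U : Ω → SU) (y : S2 × SU) :
    _root_.dist p (fun ω => (X2 ω, U ω)) y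
      = ∑ x1 : S1, _root_.dist p (fun ω => (X1 ω, X2 ω, U ω)) (x1, y.1, y.2) := by
  refine (dist_map p (fun ω => (X1 ω, X2 ω, U ω)) (fun a => (a.2.1, a.2.2)) y).trans ?_
  refine Finset.sum_nbij' (fun a => a.1) (fun b => (b, y.1, y.2)) ?_ ?_ ?_ ?_ ?_ <;>
    simp_all [Prod.ext_iff]

lemma margU {S : Type*} [Fintype S] (p : Ω → ℝ) (X : Ω → S) (U : Ω → SU) (u : SU) :
    _root_.dist p U u = ∑ x : S, _root_.dist p (fun ω => (X ω, U ω)) (x, u) := by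
  refine (dist_map p (fun ω => (X ω, U ω)) (fun a => a.2) u).trans ?_
  refine Finset.sum_nbij' (fun a => a.1) (fun b => (b, u)) ?_ ?_ ?_ ?_ ?_ <;>
    simp_all [Prod.ext_iff]

lemma cmi_eq (p : Ω → ℝ) (X1 : Ω → S1) (X2 : Ω → S2) (U : Ω → SU) :
    condMutInfo p X1 X2 U
      = ∑ a : S1 × S2 × SU, _root_.dist p (fun ω => (X1 ω, X2 ω, U ω)) a *
          (Real.log (_root_.dist p (fun ω => (X1 ω, X2 ω, U ω)) a)
           + Real.log (_root_.dist p U a.2.2)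
           - Real.log (_root_.dist p (fun ω => (X1 ω, U ω)) (a.1, a.2.2))
           - Real.log (_root_.dist p (fun ω => (X2 ω, U ω)) (a.2.1, a.2.2))) := by
  simp only [condMutInfo, ent]
  have e1 : ∑ s : S1 × SU, _root_.dist p (fun ω => (X1 ω, U ω)) s *
        Real.log (_root_.dist p (fun ω => (X1 ω, U ω)) s)
      = ∑ a : S1 × S2 × SU, _root_.dist p (fun ω => (X1 ω, X2 ω, U ω)) a *
        Real.log (_root_.dist p (fun ω => (X1 ω, U ω)) (a.1, a.2.2)) := by
    have step : ∀ s : S1 × SU, _root_.dist p (fun ω => (X1 ω, U ω)) s *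
        Real.log (_root_.dist p (fun ω => (X1 ω, U ω)) s)
        = ∑ x2 : S2, _root_.dist p (fun ω => (X1 ω, X2 ω, U ω)) (s.1, x2, s.2) *
          Real.log (_root_.dist p (fun ω => (X1 ω, U ω)) s) := by
      intro s
      nth_rewrite 1 [marg1 p X1 X2 U s]
      rw [Finset.sum_mul]
    rw [Finset.sum_congr rfl fun s _ => step s]
    conv_lhs => rw [Fintype.sum_prod_type]
    conv_rhs => rw [Fintype.sum_prod_type]; enter [2, x1]; rw [Fintype.sum_prod_type]
    exact Finset.sum_congr rfl fun x1 _ => Finset.sum_comm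
  have e2 : ∑ s : S2 × SU, _root_.dist p (fun ω => (X2 ω, U ω)) s *
        Real.log (_root_.dist p (fun ω => (X2 ω, U ω)) s)
      = ∑ a : S1 × S2 × SU, _root_.dist p (fun ω => (X1 ω, X2 ω, U ω)) a *
        Real.log (_root_.dist p (fun ω => (X2 ω, U ω)) (a.2.1, a.2.2)) := by
    have step : ∀ s : S2 × SU, _root_.dist p (fun ω => (X2 ω, U ω)) s *
        Real.log (_root_.dist p (fun ω => (X2 ω, U ω)) s)
        = ∑ x1 : S1, _root_.dist p (fun ω => (X1 ω, X2 ω, U ω)) (x1, s.1, s.2) *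
          Real.log (_root_.dist p (fun ω => (X2 ω, U ω)) s) := by
      intro s
      nth_rewrite 1 [marg2 p X1 X2 U s]
      rw [Finset.sum_mul]
    rw [Finset.sum_congr rfl fun s _ => step s]
    conv_lhs => rw [Fintype.sum_prod_type]
    conv_rhs => rw [Fintype.sum_prod_type]; enter [2, x1]; rw [Fintype.sum_prod_type]
    conv_lhs => enter [2, x2]; rw [Finset.sum_comm]
    exact Finset.sum_comm
  have eU : ∑ u : SU, _root_.dist p U u * Real.log (_root_.dist p U u)
      = ∑ a : S1 × S2 × SU, _root_.dist p (fun ω => (X1 ω, X2 ω, U ω)) a *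
        Real.log (_root_.dist p U a.2.2) := by
    have step : ∀ u : SU, _root_.dist p U u * Real.log (_root_.dist p U u)
        = ∑ x1 : S1, ∑ x2 : S2, _root_.dist p (fun ω => (X1 ω, X2 ω, U ω)) (x1, x2, u) *
          Real.log (_root_.dist p U u) := by
      intro u
      nth_rewrite 1 [margU p X1 U u]
      rw [Finset.sum_mul]
      refine Finset.sum_congr rfl fun x1 _ => ?_
      nth_rewrite 1 [marg1 p X1 X2 U (x1, u)]
      rw [Finset.sum_mul]
    rw [Finset.sum_congr rfl fun u _ => step u]
    conv_rhs => rw [Fintype.sum_prod_type]; enter [2, x1]; rw [Fintype.sum_prod_type]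
    conv_lhs => rw [Finset.sum_comm]; enter [2, x1]; rw [Finset.sum_comm]
  rw [e1, e2, eU]
  rw [show ∀ (x y z w : ℝ), -x + -y - -z - -w = (z + w) - (x + y) from fun x y z w => by ring]
  rw [← Finset.sum_add_distrib, ← Finset.sum_add_distrib, ← Finset.sum_sub_distrib]
  exact Finset.sum_congr rfl fun a _ => by ring


lemma key (p : Ω → ℝ) (hp : IsPMF p) (X1 : Ω → S1) (X2 : Ω → S2) (U : Ω → SU)
    (hci : condMutInfo p X1 X2 U = 0) (x1 : S1) (x2 : S2) (u : SU)
    (h1 : _root_.dist p (fun ω => (X1 ω, U ω)) (x1, u) ≠ 0)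
    (h2 : _root_.dist p (fun ω => (X2 ω, U ω)) (x2, u) ≠ 0) :
    _root_.dist p (fun ω => (X1 ω, X2 ω, U ω)) (x1, x2, u) ≠ 0 := by
  obtain ⟨hp0, hp1⟩ := hp
  set q : S1 × S2 × SU → ℝ := fun a => _root_.dist p (fun ω => (X1 ω, X2 ω, U ω)) a with hqdef
  set P1 : S1 × SU → ℝ := fun y => _root_.dist p (fun ω => (X1 ω, U ω)) y with hP1def
  set P2 : S2 × SU → ℝ := fun y => _root_.dist p (fun ω => (X2 ω, U ω)) y with hP2def
  set PU : SU → ℝ := fun v => _root_.dist p U v with hPUdef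
  set r : S1 × S2 × SU → ℝ :=
    fun a => P1 (a.1, a.2.2) * P2 (a.2.1, a.2.2) / PU a.2.2 with hrdef
  have hq0 : ∀ a, 0 ≤ q a := fun a => dist_nn hp0 _ a
  have hP10 : ∀ y, 0 ≤ P1 y := fun y => dist_nn hp0 _ y
  have hP20 : ∀ y, 0 ≤ P2 y := fun y => dist_nn hp0 _ y
  have hPU0 : ∀ v, 0 ≤ PU v := fun v => dist_nn hp0 _ v
  have hr0 : ∀ a, 0 ≤ r a := fun a =>
    div_nonneg (mul_nonneg (hP10 _) (hP20 _)) (hPU0 _)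
  have hqP1 : ∀ a, q a ≤ P1 (a.1, a.2.2) := by
    intro a
    rw [hP1def]
    simp only
    rw [marg1 p X1 X2 U (a.1, a.2.2)]
    exact Finset.single_le_sum (f := fun x2 => q (a.1, x2, a.2.2))
      (fun i _ => hq0 _) (Finset.mem_univ a.2.1)
  have hqP2 : ∀ a, q a ≤ P2 (a.2.1, a.2.2) := by
    intro a
    rw [hP2def]
    simp only
    rw [marg2 p X1 X2 U (a.2.1, a.2.2)]
    exact Finset.single_le_sum (f := fun x1 => q (x1, a.2.1, a.2.2))
      (fun i _ => hq0 _) (Finset.mem_univ a.1)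
  have hP1PU : ∀ y : S1 × SU, P1 y ≤ PU y.2 := by
    intro y
    rw [hPUdef]
    simp only
    rw [margU p X1 U y.2]
    exact Finset.single_le_sum (f := fun x => P1 (x, y.2))
      (fun i _ => hP10 _) (Finset.mem_univ y.1)
  have hsum_q : ∑ a, q a = 1 := (sum_dist p _).trans hp1
  have hsum_PU : ∑ v, PU v = 1 := (sum_dist p U).trans hp1
  have hsum_r : ∑ a, r a = 1 := by
    have hstep : ∑ a : S1 × S2 × SU, r a
        = ∑ v : SU, (∑ y1 : S1, P1 (y1, v)) * (∑ y2 : S2, P2 (y2, v)) / PU v := by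
      rw [hrdef]
      simp only
      conv_lhs => rw [Fintype.sum_prod_type]; enter [2, y1]; rw [Fintype.sum_prod_type]
      conv_lhs => enter [2, y1]; rw [Finset.sum_comm]
      conv_lhs => rw [Finset.sum_comm]
      refine Finset.sum_congr rfl fun v _ => ?_
      rw [Finset.sum_mul, Finset.sum_div]
      refine Finset.sum_congr rfl fun y1 _ => ?_
      rw [Finset.mul_sum, Finset.sum_div]
    rw [hstep]
    have hstep2 : ∀ v : SU, (∑ y1 : S1, P1 (y1, v)) * (∑ y2 : S2, P2 (y2, v)) / PU v
        = PU v := by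
      intro v
      rw [hP1def, hP2def, hPUdef]
      simp only
      rw [← margU p X1 U v, ← margU p X2 U v]
      rcases eq_or_ne (_root_.dist p U v) 0 with h | h
      · simp [h]
      · field_simp
    rw [Finset.sum_congr rfl fun v _ => hstep2 v]
    exact hsum_PU
  have hmain : (∑ a : S1 × S2 × SU, q a * (Real.log (q a) + Real.log (PU a.2.2)
      - Real.log (P1 (a.1, a.2.2)) - Real.log (P2 (a.2.1, a.2.2)))) = 0 := by
    rw [← cmi_eq p X1 X2 U] at *
    exact hci
  set L : S1 × S2 × SU → ℝ := fun a => q a * (Real.log (q a) + Real.log (PU a.2.2)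
      - Real.log (P1 (a.1, a.2.2)) - Real.log (P2 (a.2.1, a.2.2))) - (q a - r a) with hLdef
  have hL0 : ∀ a, 0 ≤ L a := by
    intro a
    rcases eq_or_lt_of_le (hq0 a) with h | h
    · rw [hLdef]
      simp only [← h, zero_mul, zero_sub, sub_neg_eq_add, zero_add]
      exact hr0 a
    · have hP1p : 0 < P1 (a.1, a.2.2) := lt_of_lt_of_le h (hqP1 a)
      have hP2p : 0 < P2 (a.2.1, a.2.2) := lt_of_lt_of_le h (hqP2 a)
      have hPUp : 0 < PU a.2.2 := lt_of_lt_of_le hP1p (hP1PU (a.1, a.2.2))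
      have hrp : 0 < r a := div_pos (mul_pos hP1p hP2p) hPUp
      have hlog := Real.log_le_sub_one_of_pos (div_pos hrp h)
      rw [Real.log_div hrp.ne' h.ne'] at hlog
      have hlr : Real.log (r a) = Real.log (P1 (a.1, a.2.2)) + Real.log (P2 (a.2.1, a.2.2))
          - Real.log (PU a.2.2) := by
        rw [hrdef]
        simp only
        rw [Real.log_div (mul_pos hP1p hP2p).ne' hPUp.ne', Real.log_mul hP1p.ne' hP2p.ne']
      rw [hlr] at hlog
      have hmul : q a * ((Real.log (P1 (a.1, a.2.2)) + Real.log (P2 (a.2.1, a.2.2))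
          - Real.log (PU a.2.2)) - Real.log (q a)) ≤ q a * (r a / q a - 1) :=
        mul_le_mul_of_nonneg_left hlog h.le
      have hid : q a * (r a / q a - 1) = r a - q a := by field_simp
      rw [hLdef]
      simp only
      nlinarith [hmul, hid]
  have hsumL : ∑ a, L a = 0 := by
    rw [hLdef]
    simp only
    rw [Finset.sum_sub_distrib, Finset.sum_sub_distrib, hmain, hsum_q, hsum_r]
    norm_num
  have hLzero : ∀ a ∈ Finset.univ, L a = 0 :=
    (Finset.sum_eq_zero_iff_of_nonneg (fun a _ => hL0 a)).1 hsumL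
  intro hq
  have hP1p : 0 < P1 (x1, u) := (hP10 _).lt_of_ne (Ne.symm h1)
  have hP2p : 0 < P2 (x2, u) := (hP20 _).lt_of_ne (Ne.symm h2)
  have hPUp : 0 < PU u := lt_of_lt_of_le hP1p (hP1PU (x1, u))
  have hrp : 0 < r (x1, x2, u) := div_pos (mul_pos hP1p hP2p) hPUp
  have := hLzero (x1, x2, u) (Finset.mem_univ _)
  rw [hLdef] at this
  simp only at this
  rw [show q (x1, x2, u) = 0 from hq] at this
  simp at this
  rw [this] at hrp
  exact lt_irrefl 0 hrp

lemma le_dist {S : Type*} {p : Ω → ℝ} (hp : ∀ ω, 0 ≤ p ω) (X : Ω → S) (ω : Ω) :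
    p ω ≤ _root_.dist p X (X ω) := by
  unfold _root_.dist
  have := Finset.single_le_sum (f := fun ω' => if X ω' = X ω then p ω' else 0)
    (fun i _ => by split_ifs <;> simp [hp i]) (Finset.mem_univ ω)
  simpa using this

lemma dist_ne_zero_exists {S : Type*} (p : Ω → ℝ) (X : Ω → S) (s : S)
    (h : _root_.dist p X s ≠ 0) : ∃ ω, p ω ≠ 0 ∧ X ω = s := by
  unfold _root_.dist at h
  obtain ⟨ω, -, hω⟩ := Finset.exists_ne_zero_of_sum_ne_zero h
  by_cases hc : X ω = s
  · exact ⟨ω, by rwa [if_pos hc] at hω, hc⟩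
  · rw [if_neg hc] at hω; exact absurd rfl hω

end Aux

theorem stmt7 {Ω S1 S2 SU : Type*} [Fintype Ω] [Fintype S1] [Fintype S2] [Fintype SU]
    (p : Ω → ℝ) (hp : IsPMF p) (X1 : Ω → S1) (X2 : Ω → S2) (U : Ω → SU)
    (s1 : S1 → SU) (s2 : S2 → SU)
    (hU1 : AEEq p U (fun ω => s1 (X1 ω)))
    (hU2 : AEEq p U (fun ω => s2 (X2 ω)))
    (hci : condMutInfo p X1 X2 U = 0) :
    ∀ (T : Type) [Fintype T] (f1 : S1 → T) (f2 : S2 → T),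
      AEEq p (fun ω => f1 (X1 ω)) (fun ω => f2 (X2 ω)) →
      ∃ f : SU → T, AEEq p (fun ω => f (U ω)) (fun ω => f1 (X1 ω)) := by
  intro T _ f1 f2 hf
  obtain ⟨hp0, hp1⟩ := hp
  have hppos : ∀ ω, p ω ≠ 0 → 0 < p ω := fun ω h => (hp0 ω).lt_of_ne (Ne.symm h)
  obtain ⟨ω0, hω0⟩ : ∃ ω0 : Ω, p ω0 ≠ 0 := by
    by_contra h
    push_neg at h
    simp [h] at hp1
  have key2 : ∀ ω ω', p ω ≠ 0 → p ω' ≠ 0 → U ω = U ω' → f1 (X1 ω) = f1 (X1 ω') := by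
    intro ω ω' hω hω' hUU
    have hd1 : _root_.dist p (fun ω'' => (X1 ω'', U ω'')) (X1 ω, U ω) ≠ 0 :=
      ne_of_gt (lt_of_lt_of_le (hppos ω hω) (le_dist hp0 (fun ω'' => (X1 ω'', U ω'')) ω))
    have hd2 : _root_.dist p (fun ω'' => (X2 ω'', U ω'')) (X2 ω', U ω) ≠ 0 := by
      have hle := le_dist hp0 (fun ω'' => (X2 ω'', U ω'')) ω'
      rw [← hUU] at hle
      exact ne_of_gt (lt_of_lt_of_le (hppos ω' hω') hle)
    have hkey := key p ⟨hp0, hp1⟩ X1 X2 U hci (X1 ω) (X2 ω') (U ω) hd1 hd2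
    obtain ⟨ω'', hpω'', hcond⟩ := dist_ne_zero_exists p _ _ hkey
    obtain ⟨e1, e2, e3⟩ : X1 ω'' = X1 ω ∧ X2 ω'' = X2 ω' ∧ U ω'' = U ω := by
      simpa [Prod.ext_iff] using hcond
    calc f1 (X1 ω) = f1 (X1 ω'') := by rw [e1]
      _ = f2 (X2 ω'') := hf ω'' hpω''
      _ = f2 (X2 ω') := by rw [e2]
      _ = f1 (X1 ω') := (hf ω' hω').symm
  refine ⟨fun u => if h : ∃ ω', p ω' ≠ 0 ∧ U ω' = u then f1 (X1 h.choose) else f1 (X1 ω0),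
    fun ω hω => ?_⟩
  have hex2 : ∃ ω', p ω' ≠ 0 ∧ U ω' = U ω := ⟨ω, hω, rfl⟩
  simp only [dif_pos hex2]
  exact key2 _ _ hex2.choose_spec.1 hω hex2.choose_spec.2
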